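/- Define m(ξ) = 2ξ·coth(ξ) − ξ²·csch²(ξ) − 1 for ξ ≠ 0, where coth(x) = cosh(x)/sinh(x) and csch(x) = 1/sinh(x). Then for every natural number k there exists a constant C_k > 0 such that for all real ξ ≠ 0 the second derivative satisfies |m″(ξ)| ≤ C_k·(1+|ξ|)^{−k}, i.e. m″ is rapidly decaying. -/

import Mathlib

/-- Hyperbolic cotangent. -/
noncomputable def coth (x : ℝ) : ℝ := Real.cosh x / Real.sinh x

/-- Hyperbolic cosecant. -/
noncomputable def csch (x : ℝ) : ℝ := 1 / Real.sinh x

/-- The group-velocity symbol `m(ξ) = 2ξcoth(ξ) − ξ²csch²(ξ) − 1`. -/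
noncomputable def mfun (ξ : ℝ) : ℝ := 2 * ξ * coth ξ - ξ ^ 2 * csch ξ ^ 2 - 1

noncomputable def g1 (x : ℝ) : ℝ :=
  (2 * Real.cosh x * Real.sinh x ^ 2 - 4 * x * Real.sinh x + 2 * x ^ 2 * Real.cosh x) /
    Real.sinh x ^ 3

noncomputable def Nfun (x : ℝ) : ℝ :=
  -6 * Real.sinh x ^ 2 + 12 * x * Real.cosh x * Real.sinh x - 6 * x ^ 2
    - 4 * x ^ 2 * Real.sinh x ^ 2

noncomputable def g2 (x : ℝ) : ℝ := Nfun x / Real.sinh x ^ 4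

lemma hasDerivAt_mfun {x : ℝ} (hx : x ≠ 0) : HasDerivAt mfun (g1 x) x := by
  have hs : Real.sinh x ≠ 0 := Real.sinh_ne_zero.2 hx
  have hmeq : mfun = fun y => 2 * y * (Real.cosh y / Real.sinh y)
      - y ^ 2 * (1 / Real.sinh y) ^ 2 - 1 := by
    funext y; simp [mfun, coth, csch]
  rw [hmeq]
  have h2y : HasDerivAt (fun y : ℝ => 2 * y) 2 x := by
    simpa using (hasDerivAt_id x).const_mul (2:ℝ)
  have hcoth : HasDerivAt (fun y => Real.cosh y / Real.sinh y)
      ((Real.sinh x * Real.sinh x - Real.cosh x * Real.cosh x) / Real.sinh x ^ 2) x :=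
    (Real.hasDerivAt_cosh x).div (Real.hasDerivAt_sinh x) hs
  have hcsch : HasDerivAt (fun y => 1 / Real.sinh y)
      ((0 * Real.sinh x - 1 * Real.cosh x) / Real.sinh x ^ 2) x :=
    (hasDerivAt_const x (1:ℝ)).div (Real.hasDerivAt_sinh x) hs
  have hcsch2 := hcsch.pow 2
  have hx2 : HasDerivAt (fun y : ℝ => y ^ 2) (2 * x) x := by
    simpa using hasDerivAt_pow 2 x
  have h := ((h2y.mul hcoth).sub (hx2.mul hcsch2)).sub_const 1
  refine h.congr_deriv (Eq.symm ?_)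
  have hc : Real.cosh x ^ 2 = Real.sinh x ^ 2 + 1 := Real.cosh_sq x
  simp only [g1, Pi.pow_apply]
  field_simp
  linear_combination (2 * x * Real.sinh x) * hc + (-2 * x ^ 2 * Real.cosh x) * (mul_inv_cancel₀ hs)

lemma hasDerivAt_g1 {x : ℝ} (hx : x ≠ 0) : HasDerivAt g1 (g2 x) x := by
  have hs : Real.sinh x ≠ 0 := Real.sinh_ne_zero.2 hx
  have hs3 : Real.sinh x ^ 3 ≠ 0 := pow_ne_zero _ hs
  have hnum : HasDerivAt
      (fun y => 2 * Real.cosh y * Real.sinh y ^ 2 - 4 * y * Real.sinh y + 2 * y ^ 2 * Real.cosh y)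
      ((2 * Real.sinh x) * Real.sinh x ^ 2
        + (2 * Real.cosh x) * (↑2 * Real.sinh x ^ (2-1) * Real.cosh x)
        - ((4:ℝ) * Real.sinh x + 4 * x * Real.cosh x)
        + ((2 * (2 * x)) * Real.cosh x + 2 * x ^ 2 * Real.sinh x)) x := by
    have h1 : HasDerivAt (fun y => 2 * Real.cosh y) (2 * Real.sinh x) x :=
      (Real.hasDerivAt_cosh x).const_mul 2
    have h1' := h1.mul ((Real.hasDerivAt_sinh x).pow 2)
    have h2 : HasDerivAt (fun y : ℝ => 4 * y) 4 x := by
      simpa using (hasDerivAt_id x).const_mul (4:ℝ)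
    have h2' := h2.mul (Real.hasDerivAt_sinh x)
    have h3 : HasDerivAt (fun y : ℝ => 2 * y ^ 2) (2 * (2 * x)) x := by
      simpa using (hasDerivAt_pow 2 x).const_mul (2:ℝ)
    have h3' := h3.mul (Real.hasDerivAt_cosh x)
    exact (h1'.sub h2').add h3'
  have hden : HasDerivAt (fun y => Real.sinh y ^ 3)
      (↑3 * Real.sinh x ^ (3-1) * Real.cosh x) x := (Real.hasDerivAt_sinh x).pow 3
  have h := hnum.div hden hs3
  have hg : g1 = fun y => (2 * Real.cosh y * Real.sinh y ^ 2 - 4 * y * Real.sinh y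
      + 2 * y ^ 2 * Real.cosh y) / Real.sinh y ^ 3 := by
    funext y; simp [g1]
  rw [hg]
  refine h.congr_deriv (Eq.symm ?_)
  have hc : Real.cosh x ^ 2 = Real.sinh x ^ 2 + 1 := Real.cosh_sq x
  simp only [g2, Nfun]
  field_simp
  linear_combination (6 * x ^ 2 * Real.sinh x ^ 2 + 2 * Real.sinh x ^ 4) * hc

lemma deriv_deriv_mfun {x : ℝ} (hx : x ≠ 0) : deriv (deriv mfun) x = g2 x := by
  have hev : deriv mfun =ᶠ[nhds x] g1 := by
    filter_upwards [eventually_ne_nhds hx] with y hy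
    exact (hasDerivAt_mfun hy).deriv
  rw [hev.deriv_eq]
  exact (hasDerivAt_g1 hx).deriv

lemma Nfun_eq (x : ℝ) : Nfun x =
    Real.exp (2 * x) * (-3/2 + 3 * x - x ^ 2)
      + Real.exp (-(2 * x)) * (-3/2 - 3 * x - x ^ 2) + 3 - 4 * x ^ 2 := by
  have hu : Real.exp x ≠ 0 := Real.exp_ne_zero x
  have h2 : Real.exp (2 * x) = Real.exp x * Real.exp x := by
    rw [← Real.exp_add]; ring_nf
  have hm : Real.exp (-x) = (Real.exp x)⁻¹ := Real.exp_neg x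
  have hm2 : Real.exp (-(2 * x)) = (Real.exp x * Real.exp x)⁻¹ := by
    rw [← h2, Real.exp_neg]
  simp only [Nfun, Real.sinh_eq, Real.cosh_eq, h2, hm, hm2]
  field_simp
  ring

lemma exp_taylor_bound {t : ℝ} (ht : |t| ≤ 1) :
    |Real.exp t - (1 + t + t^2/2 + t^3/6 + t^4/24 + t^5/120)| ≤ t ^ 6 := by
  have h := Real.exp_bound ht (by norm_num : 0 < 6)
  have hsum : ∑ m ∈ Finset.range 6, t ^ m / m.factorial
      = 1 + t + t^2/2 + t^3/6 + t^4/24 + t^5/120 := by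
    norm_num [Finset.sum_range_succ, Nat.factorial]
    try ring
  rw [hsum] at h
  have h2 : |t| ^ 6 * ((6:ℕ).succ / ((6:ℕ).factorial * 6)) ≤ t ^ 6 := by
    have : |t| ^ 6 = t ^ 6 := by
      rw [pow_abs, abs_of_nonneg (by positivity)]
    rw [this]
    have ht6 : (0:ℝ) ≤ t ^ 6 := by positivity
    have : ((6:ℕ).succ / ((6:ℕ).factorial * 6) : ℝ) ≤ 1 := by
      norm_num [Nat.factorial]
    nlinarith
  exact h.trans h2

lemma abs_Nfun_near {x : ℝ} (h : |x| ≤ 1/2) : |Nfun x| ≤ 128 * x ^ 4 := by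
  have hx' := abs_le.1 h
  have ht : |2 * x| ≤ 1 := by
    rw [abs_mul]; simp only [abs_two]
    nlinarith [abs_nonneg x]
  have htm : |(-(2 * x))| ≤ 1 := by rwa [abs_neg]
  have hx2 : x ^ 2 ≤ 1/4 := by nlinarith [sq_abs x]
  have hq1 : |(-3/2 + 3*x - x^2)| ≤ 13/4 := by
    rw [abs_le]; constructor <;> nlinarith [hx'.1, hx'.2, hx2]
  have hq2 : |(-3/2 - 3*x - x^2)| ≤ 13/4 := by
    rw [abs_le]; constructor <;> nlinarith [hx'.1, hx'.2, hx2]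
  set P : ℝ := 1 + 2*x + (2*x)^2/2 + (2*x)^3/6 + (2*x)^4/24 + (2*x)^5/120 with hP
  set Pm : ℝ := 1 + (-(2*x)) + (-(2*x))^2/2 + (-(2*x))^3/6 + (-(2*x))^4/24 + (-(2*x))^5/120 with hPm
  set A : ℝ := Real.exp (2*x) - P with hA
  set B : ℝ := Real.exp (-(2*x)) - Pm with hB
  have hAb : |A| ≤ 64 * x ^ 6 := by
    rw [hA, hP]
    calc |Real.exp (2*x) - (1 + 2*x + (2*x)^2/2 + (2*x)^3/6 + (2*x)^4/24 + (2*x)^5/120)|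
        ≤ (2*x) ^ 6 := exp_taylor_bound ht
      _ = 64 * x ^ 6 := by ring
  have hBb : |B| ≤ 64 * x ^ 6 := by
    rw [hB, hPm]
    calc |Real.exp (-(2*x)) - (1 + (-(2*x)) + (-(2*x))^2/2 + (-(2*x))^3/6 + (-(2*x))^4/24 + (-(2*x))^5/120)|
        ≤ (-(2*x)) ^ 6 := exp_taylor_bound htm
      _ = 64 * x ^ 6 := by ring
  have hN : Nfun x = (2 * x^4 + (4/15) * x^6)
      + A * (-3/2 + 3*x - x^2) + B * (-3/2 - 3*x - x^2) := by
    have e1 : Real.exp (2*x) = P + A := by rw [hA]; ring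
    have e2 : Real.exp (-(2*x)) = Pm + B := by rw [hB]; ring
    rw [Nfun_eq, e1, e2, hP, hPm]; ring
  have t1 : |A * (-3/2 + 3*x - x^2)| ≤ (64 * x^6) * (13/4) := by
    rw [abs_mul]
    exact mul_le_mul hAb hq1 (abs_nonneg _) (by positivity)
  have t2 : |B * (-3/2 - 3*x - x^2)| ≤ (64 * x^6) * (13/4) := by
    rw [abs_mul]
    exact mul_le_mul hBb hq2 (abs_nonneg _) (by positivity)
  have hQ : |2 * x^4 + (4/15) * x^6| = 2 * x^4 + (4/15) * x^6 :=
    abs_of_nonneg (by positivity)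
  have h6 : x ^ 6 ≤ x ^ 4 / 4 := by
    nlinarith [mul_le_mul_of_nonneg_left hx2 (show (0:ℝ) ≤ x ^ 4 by positivity)]
  calc |Nfun x| ≤ |2 * x^4 + (4/15) * x^6| + |A * (-3/2 + 3*x - x^2)|
        + |B * (-3/2 - 3*x - x^2)| := by rw [hN]; exact abs_add_three _ _ _
    _ ≤ (2 * x^4 + (4/15) * x^6) + (64 * x^6) * (13/4) + (64 * x^6) * (13/4) := by
        rw [hQ]; linarith
    _ ≤ 128 * x ^ 4 := by
        have hx4 : (0:ℝ) ≤ x ^ 4 := by positivity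
        linarith

lemma abs_Nfun_far (x : ℝ) : |Nfun x| ≤ 6 * (1 + |x|) ^ 2 * Real.exp (2 * |x|) := by
  have e1 : Real.exp (2 * x) ≤ Real.exp (2 * |x|) :=
    Real.exp_le_exp.2 (by nlinarith [le_abs_self x])
  have e2 : Real.exp (-(2 * x)) ≤ Real.exp (2 * |x|) :=
    Real.exp_le_exp.2 (by nlinarith [neg_abs_le x])
  have e3 : (1:ℝ) ≤ Real.exp (2 * |x|) := Real.one_le_exp (by positivity)
  have hp1 : (0:ℝ) < Real.exp (2 * x) := Real.exp_pos _
  have hp2 : (0:ℝ) < Real.exp (-(2 * x)) := Real.exp_pos _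
  have hq1 : |(-3/2 + 3*x - x^2)| ≤ 3/2 + 3*|x| + x^2 := by
    have h1 := le_abs_self x
    have h2 := neg_abs_le x
    rw [abs_le]; constructor <;> nlinarith
  have hq2 : |(-3/2 - 3*x - x^2)| ≤ 3/2 + 3*|x| + x^2 := by
    have h1 := le_abs_self x
    have h2 := neg_abs_le x
    rw [abs_le]; constructor <;> nlinarith
  have hxa : (0:ℝ) ≤ |x| := abs_nonneg x
  calc |Nfun x|
      ≤ |Real.exp (2*x) * (-3/2 + 3*x - x^2)| + |Real.exp (-(2*x)) * (-3/2 - 3*x - x^2)|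
        + |3 - 4*x^2| := by
        rw [Nfun_eq]
        have := abs_add_three (Real.exp (2*x) * (-3/2 + 3*x - x^2))
          (Real.exp (-(2*x)) * (-3/2 - 3*x - x^2)) (3 - 4*x^2)
        calc |Real.exp (2*x) * (-3/2 + 3*x - x^2) + Real.exp (-(2*x)) * (-3/2 - 3*x - x^2)
              + 3 - 4*x^2|
            = |Real.exp (2*x) * (-3/2 + 3*x - x^2) + Real.exp (-(2*x)) * (-3/2 - 3*x - x^2)
              + (3 - 4*x^2)| := by ring_nf
          _ ≤ _ := abs_add_three _ _ _
    _ ≤ Real.exp (2*|x|) * (3/2 + 3*|x| + x^2) + Real.exp (2*|x|) * (3/2 + 3*|x| + x^2)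
        + (3 + 4*x^2) := by
        have b1 : |Real.exp (2*x) * (-3/2 + 3*x - x^2)| ≤ Real.exp (2*|x|) * (3/2 + 3*|x| + x^2) := by
          rw [abs_mul, abs_of_pos hp1]
          exact mul_le_mul e1 hq1 (abs_nonneg _) (Real.exp_pos _).le
        have b2 : |Real.exp (-(2*x)) * (-3/2 - 3*x - x^2)| ≤ Real.exp (2*|x|) * (3/2 + 3*|x| + x^2) := by
          rw [abs_mul, abs_of_pos hp2]
          exact mul_le_mul e2 hq2 (abs_nonneg _) (Real.exp_pos _).le
        have b3 : |3 - 4*x^2| ≤ 3 + 4*x^2 := by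
          rw [abs_le]; constructor <;> nlinarith [sq_nonneg x]
        linarith
    _ ≤ 6 * (1 + |x|) ^ 2 * Real.exp (2 * |x|) := by nlinarith [sq_nonneg x, sq_abs x]

lemma sinh_pow4_ge_near (x : ℝ) : x ^ 4 ≤ Real.sinh x ^ 4 := by
  have h1 : |x| ≤ Real.sinh |x| := Real.self_le_sinh_iff.2 (abs_nonneg x)
  have h2 : |x| ^ 4 ≤ Real.sinh |x| ^ 4 := pow_le_pow_left₀ (abs_nonneg x) h1 4
  have h3 : Real.sinh |x| ^ 4 = Real.sinh x ^ 4 := by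
    rcases abs_cases x with ⟨hc, _⟩ | ⟨hc, _⟩ <;> rw [hc] <;> simp [Real.sinh_neg] <;> ring
  have h4 : |x| ^ 4 = x ^ 4 := by rw [pow_abs, abs_of_nonneg (by positivity)]
  rw [← h4, ← h3]; exact h2

lemma sinh_pow4_ge_far {x : ℝ} (h : 1/2 ≤ |x|) :
    Real.exp (4 * |x|) / 256 ≤ Real.sinh x ^ 4 := by
  have hpos : (0:ℝ) < Real.exp |x| := Real.exp_pos _
  have hxx : (2:ℝ) ≤ Real.exp |x| * Real.exp |x| := by
    have h2e : (2:ℝ) ≤ Real.exp (2 * |x|) := by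
      have h1 : (2:ℝ) ≤ Real.exp 1 := by linarith [Real.add_one_le_exp 1]
      exact h1.trans (Real.exp_le_exp.2 (by linarith))
    calc (2:ℝ) ≤ Real.exp (2 * |x|) := h2e
      _ = Real.exp |x| * Real.exp |x| := by rw [← Real.exp_add]; ring_nf
  have hu : (Real.exp |x|)⁻¹ * Real.exp |x| = 1 := inv_mul_cancel₀ (ne_of_gt hpos)
  have hinv : Real.exp (-|x|) ≤ Real.exp |x| / 2 := by
    rw [Real.exp_neg]
    nlinarith [hu, hpos, hxx, inv_pos.2 hpos]
  have hs : Real.exp |x| / 4 ≤ Real.sinh |x| := by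
    rw [Real.sinh_eq]; linarith
  have h4 : (Real.exp |x| / 4) ^ 4 ≤ Real.sinh |x| ^ 4 :=
    pow_le_pow_left₀ (by positivity) hs 4
  have heq : (Real.exp |x| / 4) ^ 4 = Real.exp (4 * |x|) / 256 := by
    have : Real.exp (4 * |x|) = Real.exp |x| ^ 4 := by
      rw [← Real.exp_nat_mul]; norm_num
    rw [this]; ring
  have h3 : Real.sinh |x| ^ 4 = Real.sinh x ^ 4 := by
    rcases abs_cases x with ⟨hc, _⟩ | ⟨hc, _⟩ <;> rw [hc] <;> simp [Real.sinh_neg] <;> ring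
  rw [← heq, ← h3]; exact h4

theorem mfun_second_deriv_rapid_decay :
    ∀ k : ℕ, ∃ C : ℝ, 0 < C ∧ ∀ ξ : ℝ, ξ ≠ 0 →
      |deriv (deriv mfun) ξ| ≤ C / (1 + |ξ|) ^ k := by
  intro k
  have hfac : (0:ℝ) < ((k+2).factorial : ℝ) := by
    exact_mod_cast Nat.factorial_pos (k+2)
  refine ⟨128 * (3/2:ℝ) ^ k + 1536 * Real.exp 1 * ((k+2).factorial : ℝ), by positivity, ?_⟩
  intro ξ hξ
  rw [deriv_deriv_mfun hξ]
  have hb : (0:ℝ) < (1 + |ξ|) ^ k := by positivity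
  rw [le_div_iff₀ hb]
  have hsne : Real.sinh ξ ≠ 0 := Real.sinh_ne_zero.2 hξ
  have hsp : (0:ℝ) < Real.sinh ξ ^ 4 := by positivity
  have habs : |g2 ξ| = |Nfun ξ| / Real.sinh ξ ^ 4 := by
    simp only [g2]; rw [abs_div, abs_of_pos hsp]
  have hfar_nonneg : (0:ℝ) ≤ 1536 * Real.exp 1 * ((k+2).factorial : ℝ) := by positivity
  have hnear_nonneg : (0:ℝ) ≤ 128 * (3/2:ℝ) ^ k := by positivity
  rcases le_or_gt (|ξ|) (1/2) with hc | hc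
  · -- near zero
    have hx4 : (0:ℝ) < ξ ^ 4 := by positivity
    have h1 : |g2 ξ| ≤ 128 := by
      rw [habs]
      calc |Nfun ξ| / Real.sinh ξ ^ 4 ≤ (128 * ξ ^ 4) / ξ ^ 4 :=
            div_le_div₀ (by positivity) (abs_Nfun_near hc) hx4 (sinh_pow4_ge_near ξ)
        _ = 128 := by field_simp
    have h2 : (1 + |ξ|) ^ k ≤ (3/2:ℝ) ^ k :=
      pow_le_pow_left₀ (by positivity) (by linarith) k
    have h3 : |g2 ξ| * (1 + |ξ|) ^ k ≤ 128 * (3/2:ℝ) ^ k :=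
      mul_le_mul h1 h2 hb.le (by norm_num)
    linarith
  · -- far from zero
    set a := |ξ| with ha
    have ha0 : (0:ℝ) ≤ a := abs_nonneg ξ
    set E := Real.exp a with hE
    have hEpos : (0:ℝ) < E := Real.exp_pos a
    have hE1 : (1:ℝ) ≤ E := Real.one_le_exp ha0
    have hE2 : Real.exp (2 * a) = E ^ 2 := by rw [hE, ← Real.exp_nat_mul]; norm_num
    have hE4 : Real.exp (4 * a) = E ^ 4 := by rw [hE, ← Real.exp_nat_mul]; norm_num
    have hpow : (1 + a) ^ (k + 2) ≤ ((k+2).factorial : ℝ) * Real.exp 1 * E := by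
      have h := Real.pow_div_factorial_le_exp (x := 1 + a) (by linarith) (k+2)
      have hexp : Real.exp (1 + a) = Real.exp 1 * E := by rw [hE, ← Real.exp_add]
      rw [div_le_iff₀ hfac] at h
      calc (1 + a) ^ (k + 2) ≤ Real.exp (1 + a) * ((k+2).factorial : ℝ) := h
        _ = ((k+2).factorial : ℝ) * Real.exp 1 * E := by rw [hexp]; ring
    have h3 : |g2 ξ| * (1 + a) ^ k ≤ 1536 * Real.exp 1 * ((k+2).factorial : ℝ) := by
      calc |g2 ξ| * (1 + a) ^ k
          ≤ (6 * (1 + a) ^ 2 * Real.exp (2 * a) / (Real.exp (4 * a) / 256)) * (1 + a) ^ k := by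
            apply mul_le_mul_of_nonneg_right _ hb.le
            rw [habs]
            exact div_le_div₀ (by positivity) (abs_Nfun_far ξ) (by positivity)
              (sinh_pow4_ge_far hc.le)
        _ = 1536 * (1 + a) ^ (k + 2) / E ^ 2 := by
            rw [hE2, hE4, pow_add]
            field_simp
            ring
        _ ≤ 1536 * (((k+2).factorial : ℝ) * Real.exp 1 * E) / E ^ 2 := by gcongr
        _ = 1536 * ((k+2).factorial : ℝ) * Real.exp 1 / E := by
            field_simp
        _ ≤ 1536 * ((k+2).factorial : ℝ) * Real.exp 1 := div_le_self (by positivity) hE1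
        _ = 1536 * Real.exp 1 * ((k+2).factorial : ℝ) := by ring
    linarith
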